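/- arXiv:1307.0046 — 2 statements merged into one kernel-verified Lean document; each statement's English description precedes it below -/
import Mathlib

section
/- Let μ, ν ∈ ℝ and let f : [0,∞) → ℝ be continuously differentiable with f and f' bounded and f(x) → 0 as x → ∞. If u₁ and u₂ are both solutions of the Stroock–Williams problem with parameters μ, ν and initial data f, then u₁(t,x) = u₂(t,x) for all t ≥ 0 and x ≥ 0. -/
open MeasureTheory Set Filter

/-- Standard normal density. -/
noncomputable def phi (x : ℝ) : ℝ := (1 / Real.sqrt (2 * Real.pi)) * Real.exp (-x ^ 2 / 2)

/-- Standard normal tail function. -/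
noncomputable def Psi (x : ℝ) : ℝ := ∫ y in Set.Ioi x, phi y

/-- The kernel `G(t;x,y)` with drift parameter `μ`. -/
noncomputable def Gker (μ t x y : ℝ) : ℝ :=
  (1 / Real.sqrt t) *
      (Real.exp (2 * μ * y) * phi ((x + y + μ * t) / Real.sqrt t) +
        phi ((x - y + μ * t) / Real.sqrt t)) -
    2 * μ * Real.exp (2 * μ * y) * Psi ((x + y + μ * t) / Real.sqrt t)

/-- The kernel `H(t;x,y)` with parameters `μ, ν`. -/
noncomputable def Hker (μ ν t x y : ℝ) : ℝ :=
  if ν = μ then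
    2 * Real.exp (2 * μ * y) *
      ((1 + μ * (x + y + μ * t)) * Psi ((x + y + μ * t) / Real.sqrt t) -
        μ * Real.sqrt t * phi ((x + y + μ * t) / Real.sqrt t))
  else
    Real.exp (2 * μ * y) / (ν - μ) *
      ((2 * ν - μ) * Real.exp (2 * (ν - μ) * (x + y + ν * t)) *
          Psi ((x + y + (2 * ν - μ) * t) / Real.sqrt t) -
        μ * Psi ((x + y + μ * t) / Real.sqrt t))

/-- The density `g(t;b,s)` of `(B_t^{-μ}, S_t^{-μ})`, vanishing off `{b ≤ s, 0 ≤ s}`. -/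
noncomputable def gker (μ t b s : ℝ) : ℝ :=
  if b ≤ s ∧ 0 ≤ s then
    Real.sqrt (2 / Real.pi) * t ^ (-(3 : ℝ) / 2) * (2 * s - b) *
      Real.exp (-(2 * s - b) ^ 2 / (2 * t) - μ * (b + μ * t / 2))
  else 0

/-- Spatial derivative (one-sided at `x = 0`). -/
noncomputable def ux (u : ℝ → ℝ → ℝ) (t x : ℝ) : ℝ :=
  derivWithin (fun z => u t z) (Set.Ici 0) x

/-- Second spatial derivative (one-sided at `x = 0`). -/
noncomputable def uxx (u : ℝ → ℝ → ℝ) (t x : ℝ) : ℝ :=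
  derivWithin (fun z => ux u t z) (Set.Ici 0) x

/-- Time derivative. -/
noncomputable def ut (u : ℝ → ℝ → ℝ) (t x : ℝ) : ℝ :=
  deriv (fun s => u s x) t

/-- `u` is a solution of the Stroock–Williams problem with parameters `μ, ν`
and initial data `f`. -/
def IsSWSolution (μ ν : ℝ) (f : ℝ → ℝ) (u : ℝ → ℝ → ℝ) : Prop :=
  ContDiffOn ℝ (⊤ : ℕ∞) (fun p : ℝ × ℝ => u p.1 p.2) (Set.Ioi 0 ×ˢ Set.Ici 0) ∧
  (∀ T > (0 : ℝ),
    ContinuousOn (fun p : ℝ × ℝ => u p.1 p.2) (Set.Icc 0 T ×ˢ Set.Ici 0) ∧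
    ContinuousOn (fun p : ℝ × ℝ => ux u p.1 p.2) (Set.Icc 0 T ×ˢ Set.Ici 0) ∧
    ∃ C : ℝ, ∀ p ∈ Set.Icc (0 : ℝ) T ×ˢ Set.Ici (0 : ℝ),
      |u p.1 p.2| ≤ C ∧ |ux u p.1 p.2| ≤ C) ∧
  (∀ t > (0 : ℝ), Filter.Tendsto (fun x => u t x) Filter.atTop (nhds 0)) ∧
  (∀ t > (0 : ℝ), ∀ x ≥ (0 : ℝ), ut u t x = μ * ux u t x + (1 / 2) * uxx u t x) ∧
  (∀ x ≥ (0 : ℝ), u 0 x = f x) ∧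
  (∀ t > (0 : ℝ), ut u t 0 = ν * ux u t 0)

/-- `f` is admissible initial data: `C¹` on `[0,∞)` with `f` and `f'` bounded
and `f(x) → 0` as `x → ∞`. -/
def IsInitialData (f : ℝ → ℝ) : Prop :=
  ContDiffOn ℝ 1 f (Set.Ici 0) ∧
  (∃ C : ℝ, ∀ x ∈ Set.Ici (0 : ℝ), |f x| ≤ C ∧ |derivWithin f (Set.Ici 0) x| ≤ C) ∧
  Filter.Tendsto f Filter.atTop (nhds 0)


open Set Filter Topology ContDiff

namespace SWAux

noncomputable def SWS : Set (ℝ × ℝ) := Set.Ioi 0 ×ˢ Set.Ici 0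

lemma uniqueDiffOn_SWS : UniqueDiffOn ℝ SWS :=
  (uniqueDiffOn_Ioi 0).prod (uniqueDiffOn_Ici 0)

lemma mem_SWS {t x : ℝ} (ht : 0 < t) (hx : 0 ≤ x) : (t, x) ∈ SWS := ⟨ht, hx⟩

lemma mapsTo_vert {t : ℝ} (ht : 0 < t) : Set.MapsTo (fun z => (t, z)) (Set.Ici (0:ℝ)) SWS :=
  fun _ hz => ⟨ht, hz⟩

lemma mapsTo_horiz {x : ℝ} (hx : 0 ≤ x) : Set.MapsTo (fun s => (s, x)) (Set.Ioi (0:ℝ)) SWS :=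
  fun _ hs => ⟨hs, hx⟩

lemma hasDerivAt_vert (t z : ℝ) : HasDerivAt (fun z' : ℝ => (t, z')) ((0:ℝ), (1:ℝ)) z :=
  HasDerivAt.prodMk (hasDerivAt_const z t) (hasDerivAt_id z)

lemma hasDerivAt_horiz (x s : ℝ) : HasDerivAt (fun s' : ℝ => (s', x)) ((1:ℝ), (0:ℝ)) s :=
  HasDerivAt.prodMk (hasDerivAt_id s) (hasDerivAt_const s x)

variable {V : ℝ × ℝ → ℝ}

lemma hasDerivWithinAt_slicex (hV : ContDiffOn ℝ (⊤ : ℕ∞) V SWS) {t x : ℝ} (ht : 0 < t) (hx : 0 ≤ x) :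
    HasDerivWithinAt (fun z => V (t, z)) (fderivWithin ℝ V SWS (t, x) (0, 1)) (Set.Ici 0) x := by
  have hD : DifferentiableWithinAt ℝ V SWS (t, x) :=
    (hV.differentiableOn (by simp)) _ (mem_SWS ht hx)
  exact hD.hasFDerivWithinAt.comp_hasDerivWithinAt x
    ((hasDerivAt_vert t x).hasDerivWithinAt) (mapsTo_vert ht)

lemma hasDerivAt_slicet (hV : ContDiffOn ℝ (⊤ : ℕ∞) V SWS) {t x : ℝ} (ht : 0 < t) (hx : 0 ≤ x) :
    HasDerivAt (fun s => V (s, x)) (fderivWithin ℝ V SWS (t, x) (1, 0)) t := by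
  have hD : DifferentiableWithinAt ℝ V SWS (t, x) :=
    (hV.differentiableOn (by simp)) _ (mem_SWS ht hx)
  have h1 : HasDerivWithinAt (fun s => V (s, x)) (fderivWithin ℝ V SWS (t, x) (1, 0))
      (Set.Ioi 0) t :=
    hD.hasFDerivWithinAt.comp_hasDerivWithinAt t
      ((hasDerivAt_horiz x t).hasDerivWithinAt) (mapsTo_horiz hx)
  exact h1.hasDerivAt (Ioi_mem_nhds ht)

lemma diffOn_fderiv (hV : ContDiffOn ℝ (⊤ : ℕ∞) V SWS) :
    DifferentiableOn ℝ (fderivWithin ℝ V SWS) SWS := by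
  have h1 : ContDiffOn ℝ 1 (fderivWithin ℝ V SWS) SWS :=
    hV.fderivWithin uniqueDiffOn_SWS ((by exact WithTop.coe_le_coe.2 le_top))
  exact h1.differentiableOn one_ne_zero

lemma hasDerivWithinAt_F_slicex (hV : ContDiffOn ℝ (⊤ : ℕ∞) V SWS) {t x : ℝ} (ht : 0 < t) (hx : 0 ≤ x)
    (w : ℝ × ℝ) :
    HasDerivWithinAt (fun z => fderivWithin ℝ V SWS (t, z) w)
      (fderivWithin ℝ (fderivWithin ℝ V SWS) SWS (t, x) (0, 1) w) (Set.Ici 0) x := by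
  have hD := ((diffOn_fderiv hV) _ (mem_SWS ht hx)).hasFDerivWithinAt
  have h1 : HasDerivWithinAt (fun z => fderivWithin ℝ V SWS (t, z))
      (fderivWithin ℝ (fderivWithin ℝ V SWS) SWS (t, x) (0, 1)) (Set.Ici 0) x :=
    hD.comp_hasDerivWithinAt x ((hasDerivAt_vert t x).hasDerivWithinAt) (mapsTo_vert ht)
  have h2 := h1.clm_apply (hasDerivWithinAt_const x _ w)
  simpa using h2

lemma hasDerivAt_F_slicet (hV : ContDiffOn ℝ (⊤ : ℕ∞) V SWS) {t x : ℝ} (ht : 0 < t) (hx : 0 ≤ x)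
    (w : ℝ × ℝ) :
    HasDerivAt (fun s => fderivWithin ℝ V SWS (s, x) w)
      (fderivWithin ℝ (fderivWithin ℝ V SWS) SWS (t, x) (1, 0) w) t := by
  have hD := ((diffOn_fderiv hV) _ (mem_SWS ht hx)).hasFDerivWithinAt
  have h1 : HasDerivWithinAt (fun s => fderivWithin ℝ V SWS (s, x))
      (fderivWithin ℝ (fderivWithin ℝ V SWS) SWS (t, x) (1, 0)) (Set.Ioi 0) t :=
    hD.comp_hasDerivWithinAt t ((hasDerivAt_horiz x t).hasDerivWithinAt) (mapsTo_horiz hx)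
  have h2 := (h1.hasDerivAt (Ioi_mem_nhds ht)).clm_apply (hasDerivAt_const t w)
  simpa using h2

lemma symm_snd (hV : ContDiffOn ℝ (⊤ : ℕ∞) V SWS) {t x : ℝ} (ht : 0 < t) (hx : 0 ≤ x) :
    fderivWithin ℝ (fderivWithin ℝ V SWS) SWS (t, x) (1, 0) (0, 1) =
      fderivWithin ℝ (fderivWithin ℝ V SWS) SWS (t, x) (0, 1) (1, 0) := by
  have hcl : (t, x) ∈ closure (interior SWS) := by
    have : interior SWS = Set.Ioi 0 ×ˢ Set.Ioi 0 := by
      rw [SWS, interior_prod_eq, interior_Ioi, interior_Ici]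
    rw [this, closure_prod_eq, closure_Ioi]
    exact ⟨le_of_lt ht, hx⟩
  exact ((hV _ (mem_SWS ht hx)).isSymmSndFDerivWithinAt (by simp; exact ENat.LEInfty.out) uniqueDiffOn_SWS hcl
    (mem_SWS ht hx)) _ _

/-- Mixed partials: `∂t ∂x V = ∂x ∂t V` on the half-space, for t > 0, x ≥ 0. -/
lemma mixed_partials (hV : ContDiffOn ℝ (⊤ : ℕ∞) V SWS) {t x : ℝ} (ht : 0 < t) (hx : 0 ≤ x) :
    HasDerivAt (fun s => derivWithin (fun z => V (s, z)) (Set.Ici 0) x)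
      (derivWithin (fun z => deriv (fun s => V (s, z)) t) (Set.Ici 0) x) t := by
  have hxu : UniqueDiffWithinAt ℝ (Set.Ici (0:ℝ)) x := uniqueDiffOn_Ici 0 x hx
  -- the right-hand side equals the second mixed fderiv
  have hR : derivWithin (fun z => deriv (fun s => V (s, z)) t) (Set.Ici 0) x =
      fderivWithin ℝ (fderivWithin ℝ V SWS) SWS (t, x) (0, 1) (1, 0) := by
    have hcongr : ∀ z ∈ Set.Ici (0:ℝ),
        deriv (fun s => V (s, z)) t = fderivWithin ℝ V SWS (t, z) (1, 0) := fun z hz =>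
      (hasDerivAt_slicet hV ht hz).deriv
    rw [derivWithin_congr hcongr (hcongr x hx)]
    exact (hasDerivWithinAt_F_slicex hV ht hx (1, 0)).derivWithin hxu
  rw [hR, ← symm_snd hV ht hx]
  have hL : HasDerivAt (fun s => fderivWithin ℝ V SWS (s, x) (0, 1))
      (fderivWithin ℝ (fderivWithin ℝ V SWS) SWS (t, x) (1, 0) (0, 1)) t :=
    hasDerivAt_F_slicet hV ht hx (0, 1)
  apply hL.congr_of_eventuallyEq
  filter_upwards [Ioi_mem_nhds ht] with s hs
  exact (hasDerivWithinAt_slicex hV hs hx).derivWithin hxu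

end SWAux



namespace SWAux

lemma abs_sinh_le_cosh (y : ℝ) : |Real.sinh y| ≤ Real.cosh y := by
  rw [Real.abs_sinh, ← Real.cosh_abs]
  nlinarith [Real.cosh_sub_sinh |y|, Real.exp_pos (-|y|)]

/-- At a left-endpoint-in-time maximum, the time derivative is nonnegative. -/
lemma T3 {φ : ℝ → ℝ} {T t₁ d : ℝ} (ht₁ : 0 < t₁) (htT : t₁ ≤ T)
    (hmax : ∀ s ∈ Set.Icc (0:ℝ) T, φ s ≤ φ t₁) (hd : HasDerivAt φ d t₁) : 0 ≤ d := by
  have hslope : Tendsto (slope φ t₁) (𝓝[<] t₁) (𝓝 d) :=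
    (hasDerivAt_iff_tendsto_slope.1 hd).mono_left
      (nhdsWithin_mono _ (fun z hz => ne_of_lt hz))
  refine ge_of_tendsto hslope ?_
  filter_upwards [Ioo_mem_nhdsLT_of_mem (Set.mem_Ioc.2 ⟨ht₁, le_refl t₁⟩)] with s hs
  have hnum : φ s - φ t₁ ≤ 0 :=
    sub_nonpos.2 (hmax s ⟨le_of_lt hs.1, le_trans (le_of_lt hs.2) htT⟩)
  have hden : s - t₁ < 0 := sub_neg.2 hs.2
  rw [slope_def_field]
  exact div_nonneg_iff.2 (Or.inr ⟨hnum, le_of_lt hden⟩)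

/-- At a maximum at the left spatial endpoint, the one-sided spatial derivative
is nonpositive. -/
lemma T2 {g : ℝ → ℝ} {d : ℝ} (hmax : ∀ z ≥ (0:ℝ), g z ≤ g 0)
    (hd : HasDerivWithinAt g d (Set.Ici 0) 0) : d ≤ 0 := by
  have hslope : Tendsto (slope g 0) (𝓝[>] 0) (𝓝 d) := by
    have := hasDerivWithinAt_iff_tendsto_slope.1 hd
    rwa [show (Set.Ici (0:ℝ) \ {0}) = Set.Ioi 0 by rw [Set.Ici_sdiff_left]] at this
  refine le_of_tendsto hslope ?_
  filter_upwards [self_mem_nhdsWithin] with z hz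
  have hz' : (0:ℝ) < z := hz
  rw [slope_def_field, sub_zero]
  exact div_nonpos_iff.2 (Or.inr ⟨sub_nonpos.2 (hmax z (le_of_lt hz')), le_of_lt hz'⟩)

/-- Interior spatial maximum: first derivative vanishes and second derivative
is nonpositive. -/
lemma T1 {g g1 : ℝ → ℝ} {x₁ g2 : ℝ} (hx₁ : 0 < x₁) (hmax : ∀ z ≥ (0:ℝ), g z ≤ g x₁)
    (hg : ∀ z > (0:ℝ), HasDerivAt g (g1 z) z) (hg2 : HasDerivAt g1 g2 x₁) :
    g1 x₁ = 0 ∧ g2 ≤ 0 := by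
  have hloc : IsLocalMax g x₁ := by
    filter_upwards [Ioi_mem_nhds hx₁] with z hz using hmax z (le_of_lt hz)
  have h1 : g1 x₁ = 0 := hloc.hasDerivAt_eq_zero (hg x₁ hx₁)
  refine ⟨h1, ?_⟩
  by_contra hc
  push_neg at hc
  -- slope of g1 tends to g2 > 0, so g1 > 0 just to the right of x₁
  have hslope : Tendsto (slope g1 x₁) (𝓝[>] x₁) (𝓝 g2) :=
    (hasDerivAt_iff_tendsto_slope.1 hg2).mono_left
      (nhdsWithin_mono _ (fun z hz => ne_of_gt hz))
  have hev : ∀ᶠ z in 𝓝[>] x₁, 0 < g1 z := by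
    filter_upwards [hslope.eventually (eventually_gt_nhds hc), self_mem_nhdsWithin]
      with z hzslope hzmem
    have hz : x₁ < z := hzmem
    rw [slope_def_field, h1, sub_zero] at hzslope
    have := mul_pos hzslope (sub_pos.2 hz)
    rwa [div_mul_cancel₀] at this
    exact ne_of_gt (sub_pos.2 hz)
  obtain ⟨b, hb, hball⟩ := (mem_nhdsGT_iff_exists_Ioo_subset).1 hev
  set m := (x₁ + b) / 2 with hm
  have hx₁m : x₁ < m := by simp only [hm]; linarith [hb.out]
  have hmb : m < b := by simp only [hm]; linarith [hb.out]
  have hmono : StrictMonoOn g (Set.Icc x₁ m) := by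
    apply strictMonoOn_of_deriv_pos (convex_Icc _ _)
    · intro z hz
      exact ((hg z (lt_of_lt_of_le hx₁ hz.1)).continuousAt).continuousWithinAt
    · intro z hz
      rw [interior_Icc] at hz
      rw [(hg z (lt_trans hx₁ hz.1)).deriv]
      exact hball ⟨hz.1, lt_trans hz.2 hmb⟩
  have : g x₁ < g m := hmono (Set.left_mem_Icc.2 (le_of_lt hx₁m))
    ⟨le_of_lt hx₁m, le_refl m⟩ hx₁m
  exact absurd (hmax m (le_trans (le_of_lt hx₁) (le_of_lt hx₁m))) (not_le.2 this)

end SWAux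

open Set Filter Topology

namespace SWAux

set_option maxHeartbeats 1000000 in
/-- Parabolic maximum principle on the strip `[0,T] × [0,∞)` with Neumann
boundary condition at `x = 0`. -/
lemma maxPrinciple (μ T C : ℝ) (hT : 0 < T)
    (Y Yx Yxx : ℝ → ℝ → ℝ)
    (hcont : ContinuousOn (fun p : ℝ × ℝ => Y p.1 p.2) (Set.Icc 0 T ×ˢ Set.Ici 0))
    (hbdd : ∀ t ∈ Set.Icc (0:ℝ) T, ∀ x ≥ (0:ℝ), Y t x ≤ C)
    (hinit : ∀ x ≥ (0:ℝ), Y 0 x ≤ 0)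
    (hYt : ∀ t ∈ Set.Ioc (0:ℝ) T, ∀ x ≥ (0:ℝ),
      HasDerivAt (fun s => Y s x) (μ * Yx t x + (1/2) * Yxx t x) t)
    (hYx : ∀ t ∈ Set.Ioc (0:ℝ) T, ∀ x ≥ (0:ℝ), HasDerivWithinAt (Y t) (Yx t x) (Set.Ici 0) x)
    (hYxx : ∀ t ∈ Set.Ioc (0:ℝ) T, ∀ x ≥ (0:ℝ), HasDerivWithinAt (Yx t) (Yxx t x) (Set.Ici 0) x)
    (hNeu : ∀ t ∈ Set.Ioc (0:ℝ) T, Yx t 0 = 0) :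
    ∀ t ∈ Set.Icc (0:ℝ) T, ∀ x ≥ (0:ℝ), Y t x ≤ 0 := by
  intro t ht x hx
  set c : ℝ := |μ| + 1 with hc
  have hc0 : 0 ≤ c := by positivity
  -- it suffices to prove the bound with an arbitrary ε-barrier
  suffices H : ∀ ε > (0:ℝ), Y t x ≤ ε * (Real.exp (c * t) * Real.cosh (x - 1)) by
    by_contra hpos
    push_neg at hpos
    set B := Real.exp (c * t) * Real.cosh (x - 1) with hB
    have hBpos : 0 < B := mul_pos (Real.exp_pos _) (Real.cosh_pos _)
    have h1 := H (Y t x / (2 * B)) (by positivity)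
    have h2 : Y t x / (2 * B) * B = Y t x / 2 := by field_simp
    rw [h2] at h1
    linarith
  intro ε hε
  -- the penalised function
  set Z : ℝ → ℝ → ℝ := fun s z => Y s z - ε * (Real.exp (c * s) * Real.cosh (z - 1)) with hZ
  rw [show Y t x = Z t x + ε * (Real.exp (c * t) * Real.cosh (x - 1)) by rw [hZ]; ring]
  have hZle : Z t x ≤ 0 := by
    by_contra hZpos
    push_neg at hZpos
    -- choose a large spatial radius R
    set R : ℝ := max (x + 1) (2 * C / ε + 2) with hR
    have hRx : x + 1 ≤ R := le_max_left _ _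
    have hR1 : (1:ℝ) ≤ R := by nlinarith [hx, hRx]
    have hRC : C < ε * Real.cosh (R - 1) := by
      have h1 : R / 2 ≤ Real.cosh (R - 1) := by
        have := Real.add_one_le_exp (R - 1)
        have h2 : Real.exp (R - 1) / 2 ≤ Real.cosh (R - 1) := by
          rw [Real.cosh_eq]
          have := Real.exp_pos (-(R - 1))
          linarith
        linarith
      have h2 : 2 * C / ε + 2 ≤ R := le_max_right _ _
      have h3 : 2 * C / ε < R := by linarith
      have h4 : 2 * C < R * ε := by
        rw [div_lt_iff₀ hε] at h3; linarith
      nlinarith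
    -- maximum over the compact box
    set K : Set (ℝ × ℝ) := Set.Icc 0 T ×ˢ Set.Icc 0 R with hK
    have hKsub : K ⊆ Set.Icc 0 T ×ˢ Set.Ici 0 :=
      Set.prod_mono_right Set.Icc_subset_Ici_self
    have hZcont : ContinuousOn (fun p : ℝ × ℝ => Z p.1 p.2) (Set.Icc 0 T ×ˢ Set.Ici 0) := by
      apply hcont.sub
      apply Continuous.continuousOn
      exact continuous_const.mul ((Real.continuous_exp.comp
        (continuous_const.mul continuous_fst)).mul
        (Real.continuous_cosh.comp (continuous_snd.sub continuous_const)))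
    have hKcomp : IsCompact K := isCompact_Icc.prod isCompact_Icc
    have hKne : K.Nonempty := ⟨(0, 0), by
      refine ⟨⟨le_refl 0, le_of_lt hT⟩, ⟨le_refl 0, ?_⟩⟩
      show (0:ℝ) ≤ R
      linarith⟩
    obtain ⟨p₁, hp₁K, hp₁max⟩ := hKcomp.exists_isMaxOn hKne (hZcont.mono hKsub)
    obtain ⟨t₁, x₁⟩ := p₁
    have ht₁mem : t₁ ∈ Set.Icc (0:ℝ) T := hp₁K.1
    have hx₁mem : x₁ ∈ Set.Icc (0:ℝ) R := hp₁K.2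
    set M : ℝ := Z t₁ x₁ with hM
    have hMge : ∀ q ∈ K, Z q.1 q.2 ≤ M := fun q hq => hp₁max hq
    have htxK : (t, x) ∈ K := ⟨ht, ⟨hx, by linarith⟩⟩
    have hMpos : 0 < M := lt_of_lt_of_le hZpos (hMge (t, x) htxK)
    -- the max over K is a global max over the strip
    have hglobal : ∀ s ∈ Set.Icc (0:ℝ) T, ∀ z ≥ (0:ℝ), Z s z ≤ M := by
      intro s hs z hz
      by_cases hzR : z ≤ R
      · exact hMge (s, z) ⟨hs, ⟨hz, hzR⟩⟩
      · push_neg at hzR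
        have h1 : Real.cosh (R - 1) ≤ Real.cosh (z - 1) := by
          rw [Real.cosh_le_cosh]
          rw [abs_of_nonneg (by linarith), abs_of_nonneg (by linarith)]
          linarith
        have h2 : (1:ℝ) ≤ Real.exp (c * s) := by
          rw [← Real.exp_zero]
          exact Real.exp_le_exp.2 (mul_nonneg hc0 hs.1)
        have h3 : Y s z ≤ C := hbdd s hs z hz
        have h4 : Real.cosh (R - 1) ≤ Real.exp (c * s) * Real.cosh (z - 1) :=
          le_trans h1 (le_mul_of_one_le_left (le_of_lt (Real.cosh_pos _)) h2)
        have h5 : ε * Real.cosh (R - 1) ≤ ε * (Real.exp (c * s) * Real.cosh (z - 1)) :=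
          mul_le_mul_of_nonneg_left h4 (le_of_lt hε)
        show Y s z - ε * (Real.exp (c * s) * Real.cosh (z - 1)) ≤ M
        linarith
    -- the maximum is not at time 0
    have ht₁pos : 0 < t₁ := by
      rcases lt_or_eq_of_le ht₁mem.1 with h | h
      · exact h
      · exfalso
        have : M = Y 0 x₁ - ε * (Real.exp (c * 0) * Real.cosh (x₁ - 1)) := by
          rw [hM, hZ, ← h]
        have h1 : Y 0 x₁ ≤ 0 := hinit x₁ hx₁mem.1
        have h2 : 0 < Real.cosh (x₁ - 1) := Real.cosh_pos _
        rw [mul_zero, Real.exp_zero, one_mul] at this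
        nlinarith
    have ht₁Ioc : t₁ ∈ Set.Ioc (0:ℝ) T := ⟨ht₁pos, ht₁mem.2⟩
    have hx₁0 : (0:ℝ) ≤ x₁ := hx₁mem.1
    -- time derivative of Z at the max is ≥ 0
    have hbarr_t : HasDerivAt (fun s => ε * (Real.exp (c * s) * Real.cosh (x₁ - 1)))
        (ε * (c * Real.exp (c * t₁) * Real.cosh (x₁ - 1))) t₁ := by
      have h1 : HasDerivAt (fun s : ℝ => c * s) c t₁ := by
        simpa using (hasDerivAt_id t₁).const_mul c
      have h2 := (h1.exp.mul_const (Real.cosh (x₁ - 1))).const_mul ε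
      exact h2.congr_deriv (by ring)
    have hZt : HasDerivAt (fun s => Z s x₁)
        (μ * Yx t₁ x₁ + (1/2) * Yxx t₁ x₁ - ε * (c * Real.exp (c * t₁) * Real.cosh (x₁ - 1)))
        t₁ := (hYt t₁ ht₁Ioc x₁ hx₁0).sub hbarr_t
    have hZt0 : 0 ≤ μ * Yx t₁ x₁ + (1/2) * Yxx t₁ x₁
        - ε * (c * Real.exp (c * t₁) * Real.cosh (x₁ - 1)) :=
      T3 ht₁pos ht₁mem.2 (fun s hs => hglobal s hs x₁ hx₁0) hZt
    -- spatial derivatives of the barrier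
    have hbarr_x : ∀ z : ℝ, HasDerivAt (fun z' => ε * (Real.exp (c * t₁) * Real.cosh (z' - 1)))
        (ε * (Real.exp (c * t₁) * Real.sinh (z - 1))) z := by
      intro z
      have h1 : HasDerivAt (fun z' : ℝ => z' - 1) 1 z := (hasDerivAt_id z).sub_const 1
      have h2 := ((h1.cosh).const_mul (Real.exp (c * t₁))).const_mul ε
      exact h2.congr_deriv (by ring)
    have hZx : ∀ z ≥ (0:ℝ), HasDerivWithinAt (Z t₁)
        (Yx t₁ z - ε * (Real.exp (c * t₁) * Real.sinh (z - 1))) (Set.Ici 0) z := by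
      intro z hz
      exact (hYx t₁ ht₁Ioc z hz).sub (hbarr_x z).hasDerivWithinAt
    rcases lt_or_eq_of_le hx₁0 with hx₁pos | hx₁eq
    · -- interior spatial maximum
      have hbarr_xx : HasDerivAt
          (fun z => ε * (Real.exp (c * t₁) * Real.sinh (z - 1)))
          (ε * (Real.exp (c * t₁) * Real.cosh (x₁ - 1))) x₁ := by
        have h1 : HasDerivAt (fun z' : ℝ => z' - 1) 1 x₁ := (hasDerivAt_id x₁).sub_const 1
        have h2 := ((h1.sinh).const_mul (Real.exp (c * t₁))).const_mul ε
        exact h2.congr_deriv (by ring)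
      have hZxx : HasDerivAt (fun z => Yx t₁ z - ε * (Real.exp (c * t₁) * Real.sinh (z - 1)))
          (Yxx t₁ x₁ - ε * (Real.exp (c * t₁) * Real.cosh (x₁ - 1))) x₁ := by
        have h1 := (hYxx t₁ ht₁Ioc x₁ hx₁0).hasDerivAt (Ici_mem_nhds hx₁pos)
        exact h1.sub hbarr_xx
      have hT1 := T1 hx₁pos (fun z hz => hglobal t₁ ht₁mem z hz)
        (fun z hz => (hZx z (le_of_lt hz)).hasDerivAt (Ici_mem_nhds hz)) hZxx
      obtain ⟨hfirst, hsecond⟩ := hT1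
      -- derive the contradiction
      have hYxval : Yx t₁ x₁ = ε * (Real.exp (c * t₁) * Real.sinh (x₁ - 1)) := by
        linarith [hfirst]
      have hYxxval : Yxx t₁ x₁ ≤ ε * (Real.exp (c * t₁) * Real.cosh (x₁ - 1)) := by
        linarith [hsecond]
      set E := Real.exp (c * t₁) with hE
      have hEpos : 0 < E := Real.exp_pos _
      have hch : 0 < Real.cosh (x₁ - 1) := Real.cosh_pos _
      have hsh : |Real.sinh (x₁ - 1)| ≤ Real.cosh (x₁ - 1) := abs_sinh_le_cosh _
      have h1 : μ * Yx t₁ x₁ ≤ |μ| * (ε * (E * Real.cosh (x₁ - 1))) := by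
        rw [hYxval]
        calc μ * (ε * (E * Real.sinh (x₁ - 1)))
            ≤ |μ * (ε * (E * Real.sinh (x₁ - 1)))| := le_abs_self _
          _ = |μ| * (ε * (E * |Real.sinh (x₁ - 1)|)) := by
              rw [abs_mul, abs_mul, abs_mul, abs_of_nonneg (le_of_lt hε),
                abs_of_nonneg (le_of_lt hEpos)]
          _ ≤ |μ| * (ε * (E * Real.cosh (x₁ - 1))) := by
              apply mul_le_mul_of_nonneg_left _ (abs_nonneg μ)
              apply mul_le_mul_of_nonneg_left _ (le_of_lt hε)
              exact mul_le_mul_of_nonneg_left hsh (le_of_lt hEpos)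
      have h2 : (1/2) * Yxx t₁ x₁ ≤ (1/2) * (ε * (E * Real.cosh (x₁ - 1))) := by
        linarith
      have h3 : ε * (c * E * Real.cosh (x₁ - 1)) ≤
          (|μ| + 1/2) * (ε * (E * Real.cosh (x₁ - 1))) := by
        linarith [hZt0, h1, h2]
      have h4 : 0 < ε * (E * Real.cosh (x₁ - 1)) := by positivity
      rw [hc] at h3
      nlinarith
    · -- boundary spatial maximum: contradiction with the Neumann condition
      have hx₁zero : x₁ = 0 := hx₁eq.symm
      subst hx₁zero
      have hd := hZx 0 (le_refl 0)
      have hdle : Yx t₁ 0 - ε * (Real.exp (c * t₁) * Real.sinh (0 - 1)) ≤ 0 :=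
        T2 (fun z hz => by
          have h1 := hglobal t₁ ht₁mem z hz
          rw [hM] at h1
          exact h1) hd
      rw [hNeu t₁ ht₁Ioc] at hdle
      have h1 : Real.sinh ((0:ℝ) - 1) < 0 := by
        have h2 : Real.sinh ((0:ℝ) - 1) < Real.sinh 0 := Real.sinh_lt_sinh.2 (by norm_num)
        simp only [Real.sinh_zero] at h2
        exact h2
      nlinarith [mul_pos (mul_pos hε (Real.exp_pos (c * t₁))) (neg_pos.2 h1), hdle]
  nlinarith [mul_pos (Real.exp_pos (c * t)) (Real.cosh_pos (x - 1)), hε, hZle]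

end SWAux

open Set Filter Topology ContDiff

namespace SWAux

/-- Third spatial derivative. -/
noncomputable def d3 (v : ℝ → ℝ → ℝ) (t x : ℝ) : ℝ :=
  derivWithin (fun z => derivWithin (fun z' => derivWithin (fun z'' => v t z'') (Set.Ici 0) z')
    (Set.Ici 0) z) (Set.Ici 0) x

variable {v : ℝ → ℝ → ℝ}

lemma slice_contDiffOn (hv : ContDiffOn ℝ (⊤ : ℕ∞) (fun p : ℝ × ℝ => v p.1 p.2) SWS) {t : ℝ}
    (ht : 0 < t) : ContDiffOn ℝ 3 (fun z => v t z) (Set.Ici 0) := by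
  have h1 : ContDiffOn ℝ (⊤ : ℕ∞) ((fun p : ℝ × ℝ => v p.1 p.2) ∘ (fun z : ℝ => (t, z)))
      (Set.Ici 0) :=
    hv.comp ((contDiff_const.prodMk contDiff_id).contDiffOn) (fun z hz => ⟨ht, hz⟩)
  exact (h1.of_le (by exact ENat.LEInfty.out)).congr (fun z hz => rfl)

lemma d1_contDiffOn (hv : ContDiffOn ℝ (⊤ : ℕ∞) (fun p : ℝ × ℝ => v p.1 p.2) SWS) {t : ℝ}
    (ht : 0 < t) :
    ContDiffOn ℝ 2 (derivWithin (fun z => v t z) (Set.Ici 0)) (Set.Ici 0) :=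
  (slice_contDiffOn hv ht).derivWithin (uniqueDiffOn_Ici 0) (by norm_num)

lemma d2_contDiffOn (hv : ContDiffOn ℝ (⊤ : ℕ∞) (fun p : ℝ × ℝ => v p.1 p.2) SWS) {t : ℝ}
    (ht : 0 < t) :
    ContDiffOn ℝ 1 (derivWithin (derivWithin (fun z => v t z) (Set.Ici 0)) (Set.Ici 0))
      (Set.Ici 0) :=
  (d1_contDiffOn hv ht).derivWithin (uniqueDiffOn_Ici 0) (by norm_num)

lemma hasDeriv_d1 (hv : ContDiffOn ℝ (⊤ : ℕ∞) (fun p : ℝ × ℝ => v p.1 p.2) SWS) {t x : ℝ}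
    (ht : 0 < t) (hx : 0 ≤ x) :
    HasDerivWithinAt (fun z => v t z)
      (derivWithin (fun z => v t z) (Set.Ici 0) x) (Set.Ici 0) x :=
  (((slice_contDiffOn hv ht).differentiableOn (by norm_num)) x hx).hasDerivWithinAt

lemma hasDeriv_d2 (hv : ContDiffOn ℝ (⊤ : ℕ∞) (fun p : ℝ × ℝ => v p.1 p.2) SWS) {t x : ℝ}
    (ht : 0 < t) (hx : 0 ≤ x) :
    HasDerivWithinAt (derivWithin (fun z => v t z) (Set.Ici 0))
      (derivWithin (derivWithin (fun z => v t z) (Set.Ici 0)) (Set.Ici 0) x)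
      (Set.Ici 0) x :=
  (((d1_contDiffOn hv ht).differentiableOn (by norm_num)) x hx).hasDerivWithinAt

lemma hasDeriv_d3 (hv : ContDiffOn ℝ (⊤ : ℕ∞) (fun p : ℝ × ℝ => v p.1 p.2) SWS) {t x : ℝ}
    (ht : 0 < t) (hx : 0 ≤ x) :
    HasDerivWithinAt (derivWithin (derivWithin (fun z => v t z) (Set.Ici 0)) (Set.Ici 0))
      (d3 v t x) (Set.Ici 0) x :=
  (((d2_contDiffOn hv ht).differentiableOn (by norm_num)) x hx).hasDerivWithinAt

lemma hasDeriv_t (hv : ContDiffOn ℝ (⊤ : ℕ∞) (fun p : ℝ × ℝ => v p.1 p.2) SWS) {t x : ℝ}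
    (ht : 0 < t) (hx : 0 ≤ x) :
    HasDerivAt (fun s => v s x) (deriv (fun s => v s x) t) t := by
  have h : HasDerivAt (fun s => v s x)
      (fderivWithin ℝ (fun p : ℝ × ℝ => v p.1 p.2) SWS (t, x) (1, 0)) t :=
    hasDerivAt_slicet hv ht hx
  rw [h.deriv]
  exact h

end SWAux

open Set Filter Topology ContDiff

namespace SWAux

variable {v : ℝ → ℝ → ℝ}

/-- Time derivative of `∂ₓv + k v`, using the PDE and equality of mixed partials. -/
lemma Yt_hasDerivAt (hv : ContDiffOn ℝ (⊤ : ℕ∞) (fun p : ℝ × ℝ => v p.1 p.2) SWS) (μ k : ℝ)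
    (hPDE : ∀ t > (0:ℝ), ∀ x ≥ (0:ℝ), deriv (fun s => v s x) t =
      μ * derivWithin (fun z => v t z) (Set.Ici 0) x +
        (1/2) * derivWithin (derivWithin (fun z => v t z) (Set.Ici 0)) (Set.Ici 0) x)
    {t x : ℝ} (ht : 0 < t) (hx : 0 ≤ x) :
    HasDerivAt (fun s => derivWithin (fun z => v s z) (Set.Ici 0) x + k * v s x)
      (μ * (derivWithin (derivWithin (fun z => v t z) (Set.Ici 0)) (Set.Ici 0) x +
          k * derivWithin (fun z => v t z) (Set.Ici 0) x) +
        (1/2) * (d3 v t x +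
          k * derivWithin (derivWithin (fun z => v t z) (Set.Ici 0)) (Set.Ici 0) x)) t := by
  have hmix : HasDerivAt (fun s => derivWithin (fun z => v s z) (Set.Ici 0) x)
      (derivWithin (fun z => deriv (fun s => v s z) t) (Set.Ici 0) x) t :=
    mixed_partials hv ht hx
  have hRHS : derivWithin (fun z => deriv (fun s => v s z) t) (Set.Ici 0) x =
      μ * derivWithin (derivWithin (fun z => v t z) (Set.Ici 0)) (Set.Ici 0) x +
        (1/2) * d3 v t x := by
    have e1 : derivWithin (fun z => deriv (fun s => v s z) t) (Set.Ici 0) x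
        = derivWithin (fun z => μ * derivWithin (fun z' => v t z') (Set.Ici 0) z +
            (1/2) * derivWithin (derivWithin (fun z' => v t z') (Set.Ici 0)) (Set.Ici 0) z)
          (Set.Ici 0) x :=
      derivWithin_congr (fun z hz => hPDE t ht z hz) (hPDE t ht x hx)
    rw [e1]
    exact (((hasDeriv_d2 hv ht hx).const_mul μ).add
      ((hasDeriv_d3 hv ht hx).const_mul (1/2))).derivWithin (uniqueDiffOn_Ici 0 x hx)
  rw [hRHS] at hmix
  have hvt : HasDerivAt (fun s => v s x)
      (μ * derivWithin (fun z => v t z) (Set.Ici 0) x +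
        (1/2) * derivWithin (derivWithin (fun z => v t z) (Set.Ici 0)) (Set.Ici 0) x) t := by
    have h := hasDeriv_t hv ht hx
    rwa [hPDE t ht x hx] at h
  have hsum := hmix.add (hvt.const_mul k)
  exact hsum.congr_deriv (by ring)

end SWAux

open Set Filter Topology

lemma ux_def (u : ℝ → ℝ → ℝ) (t x : ℝ) :
    ux u t x = derivWithin (fun z => u t z) (Set.Ici 0) x := rfl

lemma uxx_def (u : ℝ → ℝ → ℝ) (t x : ℝ) :
    uxx u t x = derivWithin (fun z => ux u t z) (Set.Ici 0) x := rfl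

set_option maxHeartbeats 2000000 in
/-- uniqueness of the solution to the Stroock–Williams problem. -/
theorem stroock_williams_uniqueness (μ ν : ℝ) (f : ℝ → ℝ) (hf : IsInitialData f)
    (u₁ u₂ : ℝ → ℝ → ℝ) (h₁ : IsSWSolution μ ν f u₁) (h₂ : IsSWSolution μ ν f u₂) :
    ∀ t ≥ (0 : ℝ), ∀ x ≥ (0 : ℝ), u₁ t x = u₂ t x := by
  obtain ⟨hs₁, hstrip₁, hdec₁, hpde₁, hini₁, hbc₁⟩ := h₁
  obtain ⟨hs₂, hstrip₂, hdec₂, hpde₂, hini₂, hbc₂⟩ := h₂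
  set v : ℝ → ℝ → ℝ := fun t x => u₁ t x - u₂ t x with hvdef
  have hsS₁ : ContDiffOn ℝ (⊤ : ℕ∞) (fun p : ℝ × ℝ => u₁ p.1 p.2) SWAux.SWS := hs₁
  have hsS₂ : ContDiffOn ℝ (⊤ : ℕ∞) (fun p : ℝ × ℝ => u₂ p.1 p.2) SWAux.SWS := hs₂
  have hv : ContDiffOn ℝ (⊤ : ℕ∞) (fun p : ℝ × ℝ => v p.1 p.2) SWAux.SWS := hsS₁.sub hsS₂
  -- initial value of v is 0
  have hI1 : ∀ x ≥ (0:ℝ), v 0 x = 0 := by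
    intro x hx
    show u₁ 0 x - u₂ 0 x = 0
    rw [hini₁ x hx, hini₂ x hx, sub_self]
  -- linearity of the first spatial derivative for t > 0
  have hI2pos : ∀ t > (0:ℝ), ∀ x ≥ (0:ℝ),
      derivWithin (fun z => v t z) (Set.Ici 0) x = ux u₁ t x - ux u₂ t x := by
    intro t ht x hx
    have hd₁ := ((SWAux.slice_contDiffOn hsS₁ ht).differentiableOn (by norm_num)) x hx
    have hd₂ := ((SWAux.slice_contDiffOn hsS₂ ht).differentiableOn (by norm_num)) x hx
    rw [ux_def, ux_def]
    exact derivWithin_fun_sub hd₁ hd₂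
  -- at time 0 the first spatial derivative of v vanishes
  have hI2zero : ∀ x ≥ (0:ℝ), derivWithin (fun z => v 0 z) (Set.Ici 0) x = 0 := by
    intro x hx
    have he : Set.EqOn (fun z => v 0 z) (fun _ => (0:ℝ)) (Set.Ici 0) := by
      intro z hz
      show u₁ 0 z - u₂ 0 z = 0
      rw [hini₁ z hz, hini₂ z hz, sub_self]
    have e0 : derivWithin (fun z => v 0 z) (Set.Ici 0) x =
        derivWithin (fun _ => (0:ℝ)) (Set.Ici 0) x := derivWithin_congr he (he hx)
    rw [e0]
    exact (hasDerivWithinAt_const x (Set.Ici 0) (0:ℝ)).derivWithin (uniqueDiffOn_Ici 0 x hx)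
  have huxzero : ∀ x ≥ (0:ℝ), ux u₁ 0 x = ux u₂ 0 x := by
    intro x hx
    have e1 : Set.EqOn (fun z => u₁ 0 z) f (Set.Ici 0) := fun z hz => hini₁ z hz
    have e2 : Set.EqOn (fun z => u₂ 0 z) f (Set.Ici 0) := fun z hz => hini₂ z hz
    have d1 : derivWithin (fun z => u₁ 0 z) (Set.Ici 0) x = derivWithin f (Set.Ici 0) x :=
      derivWithin_congr e1 (e1 hx)
    have d2 : derivWithin (fun z => u₂ 0 z) (Set.Ici 0) x = derivWithin f (Set.Ici 0) x :=
      derivWithin_congr e2 (e2 hx)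
    rw [ux_def, ux_def, d1, d2]
  have hI2 : ∀ t ≥ (0:ℝ), ∀ x ≥ (0:ℝ),
      derivWithin (fun z => v t z) (Set.Ici 0) x = ux u₁ t x - ux u₂ t x := by
    intro t ht x hx
    rcases eq_or_lt_of_le ht with h | h
    · rw [← h, hI2zero x hx, huxzero x hx, sub_self]
    · exact hI2pos t h x hx
  -- linearity of the second spatial derivative for t > 0
  have hI4 : ∀ t > (0:ℝ), ∀ x ≥ (0:ℝ),
      derivWithin (derivWithin (fun z => v t z) (Set.Ici 0)) (Set.Ici 0) x =
        uxx u₁ t x - uxx u₂ t x := by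
    intro t ht x hx
    have he : Set.EqOn (derivWithin (fun z => v t z) (Set.Ici 0))
        (fun z => ux u₁ t z - ux u₂ t z) (Set.Ici 0) := fun z hz => hI2pos t ht z hz
    have e0 : derivWithin (derivWithin (fun z => v t z) (Set.Ici 0)) (Set.Ici 0) x =
        derivWithin (fun z => ux u₁ t z - ux u₂ t z) (Set.Ici 0) x :=
      derivWithin_congr he (he hx)
    rw [e0]
    have hd₁ := ((SWAux.d1_contDiffOn hsS₁ ht).differentiableOn (by norm_num)) x hx
    have hd₂ := ((SWAux.d1_contDiffOn hsS₂ ht).differentiableOn (by norm_num)) x hx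
    rw [uxx_def, uxx_def]
    exact derivWithin_fun_sub hd₁ hd₂
  -- time derivative of v
  have hvt : ∀ t > (0:ℝ), ∀ x ≥ (0:ℝ),
      HasDerivAt (fun s => v s x) (ut u₁ t x - ut u₂ t x) t := by
    intro t ht x hx
    exact (SWAux.hasDeriv_t hsS₁ ht hx).sub (SWAux.hasDeriv_t hsS₂ ht hx)
  -- the PDE for v
  have hI3 : ∀ t > (0:ℝ), ∀ x ≥ (0:ℝ), deriv (fun s => v s x) t =
      μ * derivWithin (fun z => v t z) (Set.Ici 0) x +
        (1/2) * derivWithin (derivWithin (fun z => v t z) (Set.Ici 0)) (Set.Ici 0) x := by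
    intro t ht x hx
    rw [(hvt t ht x hx).deriv, hpde₁ t ht x hx, hpde₂ t ht x hx, hI2pos t ht x hx,
      hI4 t ht x hx]
    ring
  -- the boundary condition for v
  have hI5 : ∀ t > (0:ℝ),
      derivWithin (derivWithin (fun z => v t z) (Set.Ici 0)) (Set.Ici 0) 0 =
        2 * (ν - μ) * derivWithin (fun z => v t z) (Set.Ici 0) 0 := by
    intro t ht
    have e1 : deriv (fun s => v s 0) t = ν * derivWithin (fun z => v t z) (Set.Ici 0) 0 := by
      rw [(hvt t ht 0 le_rfl).deriv, hbc₁ t ht, hbc₂ t ht, hI2pos t ht 0 le_rfl]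
      ring
    have e2 := hI3 t ht 0 le_rfl
    rw [e1] at e2
    linear_combination (-2 : ℝ) * e2
  -- the auxiliary function Y with Neumann boundary condition
  set k : ℝ := 2 * (μ - ν) with hk
  set Y : ℝ → ℝ → ℝ := fun t x => derivWithin (fun z => v t z) (Set.Ici 0) x + k * v t x
    with hYdef
  set Yx : ℝ → ℝ → ℝ := fun t x =>
    derivWithin (derivWithin (fun z => v t z) (Set.Ici 0)) (Set.Ici 0) x +
      k * derivWithin (fun z => v t z) (Set.Ici 0) x with hYxdef
  set Yxx : ℝ → ℝ → ℝ := fun t x => SWAux.d3 v t x +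
      k * derivWithin (derivWithin (fun z => v t z) (Set.Ici 0)) (Set.Ici 0) x with hYxxdef
  have hYzero : ∀ T > (0:ℝ), ∀ t ∈ Set.Icc (0:ℝ) T, ∀ x ≥ (0:ℝ), Y t x = 0 := by
    intro T hT
    obtain ⟨C₁, hC₁⟩ := (hstrip₁ T hT).2.2
    obtain ⟨C₂, hC₂⟩ := (hstrip₂ T hT).2.2
    set C : ℝ := C₁ + C₂ + |k| * (C₁ + C₂) with hC
    -- continuity of Y on the strip
    have hYeq : ∀ p ∈ Set.Icc (0:ℝ) T ×ˢ Set.Ici (0:ℝ),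
        Y p.1 p.2 = (ux u₁ p.1 p.2 - ux u₂ p.1 p.2) + k * (u₁ p.1 p.2 - u₂ p.1 p.2) := by
      intro p hp
      show derivWithin (fun z => v p.1 z) (Set.Ici 0) p.2 + k * v p.1 p.2 = _
      rw [hI2 p.1 hp.1.1 p.2 hp.2]
    have hcontY : ContinuousOn (fun p : ℝ × ℝ => Y p.1 p.2)
        (Set.Icc 0 T ×ˢ Set.Ici 0) := by
      have hbase : ContinuousOn (fun p : ℝ × ℝ =>
          (ux u₁ p.1 p.2 - ux u₂ p.1 p.2) + k * (u₁ p.1 p.2 - u₂ p.1 p.2))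
          (Set.Icc 0 T ×ˢ Set.Ici 0) :=
        ((hstrip₁ T hT).2.1.sub (hstrip₂ T hT).2.1).add
          (continuousOn_const.mul ((hstrip₁ T hT).1.sub (hstrip₂ T hT).1))
      exact hbase.congr (fun p hp => hYeq p hp)
    -- bound on |Y|
    have habs : ∀ t ∈ Set.Icc (0:ℝ) T, ∀ x ≥ (0:ℝ), |Y t x| ≤ C := by
      intro t ht x hx
      have hp : ((t, x) : ℝ × ℝ) ∈ Set.Icc (0:ℝ) T ×ˢ Set.Ici (0:ℝ) := ⟨ht, hx⟩
      have h₁ := hC₁ (t, x) hp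
      have h₂ := hC₂ (t, x) hp
      rw [hYeq (t, x) hp]
      have e1 : |ux u₁ t x - ux u₂ t x| ≤ C₁ + C₂ := by
        calc |ux u₁ t x - ux u₂ t x| = |ux u₁ t x + -(ux u₂ t x)| := by rw [sub_eq_add_neg]
          _ ≤ |ux u₁ t x| + |(-(ux u₂ t x))| := abs_add_le _ _
          _ = |ux u₁ t x| + |ux u₂ t x| := by rw [abs_neg]
          _ ≤ C₁ + C₂ := add_le_add h₁.2 h₂.2
      have e2 : |k * (u₁ t x - u₂ t x)| ≤ |k| * (C₁ + C₂) := by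
        rw [abs_mul]
        apply mul_le_mul_of_nonneg_left _ (abs_nonneg k)
        calc |u₁ t x - u₂ t x| = |u₁ t x + -(u₂ t x)| := by rw [sub_eq_add_neg]
          _ ≤ |u₁ t x| + |(-(u₂ t x))| := abs_add_le _ _
          _ = |u₁ t x| + |u₂ t x| := by rw [abs_neg]
          _ ≤ C₁ + C₂ := add_le_add h₁.1 h₂.1
      calc |(ux u₁ t x - ux u₂ t x) + k * (u₁ t x - u₂ t x)|
          ≤ |ux u₁ t x - ux u₂ t x| + |k * (u₁ t x - u₂ t x)| := abs_add_le _ _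
        _ ≤ C := by rw [hC]; linarith
    have hinitY : ∀ x ≥ (0:ℝ), Y 0 x = 0 := by
      intro x hx
      show derivWithin (fun z => v 0 z) (Set.Ici 0) x + k * v 0 x = 0
      rw [hI2zero x hx, hI1 x hx]
      ring
    -- derivative facts for Y
    have hYt' : ∀ t ∈ Set.Ioc (0:ℝ) T, ∀ x ≥ (0:ℝ),
        HasDerivAt (fun s => Y s x) (μ * Yx t x + (1/2) * Yxx t x) t := by
      intro t ht x hx
      exact SWAux.Yt_hasDerivAt hv μ k hI3 ht.1 hx
    have hYx' : ∀ t ∈ Set.Ioc (0:ℝ) T, ∀ x ≥ (0:ℝ),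
        HasDerivWithinAt (Y t) (Yx t x) (Set.Ici 0) x := by
      intro t ht x hx
      exact (SWAux.hasDeriv_d2 hv ht.1 hx).add ((SWAux.hasDeriv_d1 hv ht.1 hx).const_mul k)
    have hYxx' : ∀ t ∈ Set.Ioc (0:ℝ) T, ∀ x ≥ (0:ℝ),
        HasDerivWithinAt (Yx t) (Yxx t x) (Set.Ici 0) x := by
      intro t ht x hx
      exact (SWAux.hasDeriv_d3 hv ht.1 hx).add ((SWAux.hasDeriv_d2 hv ht.1 hx).const_mul k)
    have hNeu' : ∀ t ∈ Set.Ioc (0:ℝ) T, Yx t 0 = 0 := by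
      intro t ht
      show derivWithin (derivWithin (fun z => v t z) (Set.Ici 0)) (Set.Ici 0) 0 +
        k * derivWithin (fun z => v t z) (Set.Ici 0) 0 = 0
      rw [hI5 t ht.1, hk]
      ring
    have hup := SWAux.maxPrinciple μ T C hT Y Yx Yxx hcontY
      (fun t ht x hx => le_trans (le_abs_self _) (habs t ht x hx)) 
      (fun x hx => le_of_eq (hinitY x hx)) hYt' hYx' hYxx' hNeu'
    have hdown := SWAux.maxPrinciple μ T C hT (fun t x => -(Y t x)) (fun t x => -(Yx t x))
      (fun t x => -(Yxx t x)) hcontY.neg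
      (fun t ht x hx => show -(Y t x) ≤ C from le_trans (neg_le_abs _) (habs t ht x hx))
      (fun x hx => show -(Y 0 x) ≤ 0 by rw [hinitY x hx, neg_zero])
      (fun t ht x hx => by
        have h := (hYt' t ht x hx).neg
        have e : -(μ * Yx t x + (1/2) * Yxx t x) =
            μ * -(Yx t x) + (1/2) * -(Yxx t x) := by ring
        rw [e] at h
        exact h)
      (fun t ht x hx => (hYx' t ht x hx).neg)
      (fun t ht x hx => (hYxx' t ht x hx).neg)
      (fun t ht => show -(Yx t 0) = 0 by rw [hNeu' t ht, neg_zero])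
    intro t ht x hx
    have h1 := hup t ht x hx
    have h2 : -(Y t x) ≤ 0 := hdown t ht x hx
    linarith
  -- conclusion via the ODE in time
  intro t ht x hx
  rcases eq_or_lt_of_le ht with h | hpos
  · rw [← h, hini₁ x hx, hini₂ x hx]
  · have hd1v : ∀ s > (0:ℝ), ∀ z ≥ (0:ℝ),
        derivWithin (fun z' => v s z') (Set.Ici 0) z = -k * v s z := by
      intro s hs z hz
      have h := hYzero (s + 1) (by linarith) s ⟨le_of_lt hs, by linarith⟩ z hz
      have h' : derivWithin (fun z' => v s z') (Set.Ici 0) z + k * v s z = 0 := h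
      linarith
    have hd2v : ∀ s > (0:ℝ), ∀ z ≥ (0:ℝ),
        derivWithin (derivWithin (fun z' => v s z') (Set.Ici 0)) (Set.Ici 0) z =
          (k * k) * v s z := by
      intro s hs z hz
      have he : Set.EqOn (derivWithin (fun z' => v s z') (Set.Ici 0))
          (fun z' => -k * v s z') (Set.Ici 0) := fun z' hz' => hd1v s hs z' hz'
      have e0 : derivWithin (derivWithin (fun z' => v s z') (Set.Ici 0)) (Set.Ici 0) z =
          derivWithin (fun z' => -k * v s z') (Set.Ici 0) z :=
        derivWithin_congr he (he hz)
      rw [e0]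
      have h2 := ((SWAux.hasDeriv_d1 hv hs hz).const_mul (-k)).derivWithin
        (uniqueDiffOn_Ici 0 z hz)
      rw [h2, hd1v s hs z hz]
      ring
    set K : ℝ := -μ * k + k * k / 2 with hK
    have hODE : ∀ s > (0:ℝ), HasDerivAt (fun s' => v s' x) (K * v s x) s := by
      intro s hs
      have h := SWAux.hasDeriv_t hv hs hx
      rw [hI3 s hs x hx, hd1v s hs x hx, hd2v s hs x hx] at h
      have e : μ * (-k * v s x) + 1/2 * (k * k * v s x) = K * v s x := by rw [hK]; ring
      rwa [e] at h
    set G : ℝ → ℝ := fun s => Real.exp (-K * s) * v s x with hG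
    have hGd : ∀ s > (0:ℝ), HasDerivAt G 0 s := by
      intro s hs
      have h1 : HasDerivAt (fun s' : ℝ => -K * s') (-K) s := by
        simpa using (hasDerivAt_id s).const_mul (-K)
      have h := h1.exp.mul (hODE s hs)
      exact h.congr_deriv (by ring)
    have hgc : ContinuousOn (fun s => v s x) (Set.Icc 0 t) := by
      have hvc : ContinuousOn (fun p : ℝ × ℝ => v p.1 p.2) (Set.Icc 0 t ×ˢ Set.Ici 0) :=
        (hstrip₁ t hpos).1.sub (hstrip₂ t hpos).1
      have hmap : Set.MapsTo (fun s : ℝ => (s, x)) (Set.Icc 0 t)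
          (Set.Icc 0 t ×ˢ Set.Ici 0) := fun s hs => ⟨hs, hx⟩
      exact hvc.comp ((continuous_id.prodMk continuous_const).continuousOn) hmap
    have hGc : ContinuousOn G (Set.Icc 0 t) :=
      ((Real.continuous_exp.comp (continuous_const.mul continuous_id)).continuousOn).mul hgc
    have hGdiff : DifferentiableOn ℝ G (interior (Set.Icc 0 t)) := by
      intro s hs
      rw [interior_Icc] at hs
      exact ((hGd s hs.1).differentiableAt).differentiableWithinAt
    have hmono := monotoneOn_of_deriv_nonneg (convex_Icc 0 t) hGc hGdiff
      (fun s hs => by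
        rw [interior_Icc] at hs
        rw [(hGd s hs.1).deriv])
    have hanti := antitoneOn_of_deriv_nonpos (convex_Icc 0 t) hGc hGdiff
      (fun s hs => by
        rw [interior_Icc] at hs
        rw [(hGd s hs.1).deriv])
    have h0mem : (0:ℝ) ∈ Set.Icc (0:ℝ) t := ⟨le_rfl, le_of_lt hpos⟩
    have htmem : t ∈ Set.Icc (0:ℝ) t := ⟨le_of_lt hpos, le_rfl⟩
    have hGt0 : G t = G 0 :=
      le_antisymm (hanti h0mem htmem (le_of_lt hpos)) (hmono h0mem htmem (le_of_lt hpos))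
    have hG0 : G 0 = 0 := by
      show Real.exp (-K * 0) * v 0 x = 0
      rw [hI1 x hx]
      ring
    have hvzero : Real.exp (-K * t) * v t x = 0 := hGt0.trans hG0
    have hvtx : v t x = 0 :=
      (mul_eq_zero.1 hvzero).resolve_left (Real.exp_ne_zero _)
    have : u₁ t x - u₂ t x = 0 := hvtx
    linarith
end

section
/- Let μ ∈ ℝ. For every bounded continuous function h : [0,∞) → ℝ, every t > 0 and every x ≥ 0: ∫₀^∞ ∫_{−∞}^{s} h(max(x,s) − b) g(t;b,s) db ds = ∫₀^∞ h(y) G(t;x,y) dy. -/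
open MeasureTheory Set Filter Topology

lemma phi_integrable : MeasureTheory.Integrable phi := by
  have : phi = fun x => (1 / Real.sqrt (2 * Real.pi)) * Real.exp (-(1/2) * x ^ 2) := by
    funext x; unfold phi; congr 1; ring_nf
  rw [this]
  exact (integrable_exp_neg_mul_sq (by norm_num)).const_mul _

lemma phi_nonneg (x : ℝ) : 0 ≤ phi x := by
  unfold phi; positivity

lemma phi_continuous : Continuous phi := by
  unfold phi; fun_prop

lemma Psi_aux {c x : ℝ} (h : c ≤ x) : Psi c = (∫ t in c..x, phi t) + Psi x := by
  unfold Psi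
  rw [intervalIntegral.integral_of_le h, ← setIntegral_union (Ioc_disjoint_Ioi le_rfl)
    measurableSet_Ioi phi_integrable.integrableOn phi_integrable.integrableOn,
    Ioc_union_Ioi_eq_Ioi h]

lemma Psi_eq (c x : ℝ) : Psi x = Psi c - ∫ t in c..x, phi t := by
  rcases le_total c x with h | h
  · rw [Psi_aux h]; ring
  · rw [Psi_aux h, intervalIntegral.integral_symm]; ring

lemma Psi_hasDerivAt (x : ℝ) : HasDerivAt Psi (-phi x) x := by
  have : Psi = fun x => Psi 0 - ∫ t in (0:ℝ)..x, phi t := funext fun x => Psi_eq 0 x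
  rw [this]
  have h := intervalIntegral.integral_hasDerivAt_right
    (phi_integrable.intervalIntegrable) (phi_integrable.aestronglyMeasurable.stronglyMeasurableAtFilter) phi_continuous.continuousAt (a := (0:ℝ)) (b := x)
  simpa using h.const_sub (Psi 0)

lemma Psi_tendsto : Tendsto Psi atTop (𝓝 0) := by
  have h1 : Tendsto (fun x : ℝ => ∫ t in (0:ℝ)..x, phi t) atTop (𝓝 (Psi 0)) :=
    intervalIntegral_tendsto_integral_Ioi 0 phi_integrable.integrableOn tendsto_id
  have : Tendsto (fun x : ℝ => Psi 0 - ∫ t in (0:ℝ)..x, phi t) atTop (𝓝 (Psi 0 - Psi 0)) :=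
    tendsto_const_nhds.sub h1
  simpa [← Psi_eq] using this

lemma Psi_nonneg (x : ℝ) : 0 ≤ Psi x :=
  setIntegral_nonneg measurableSet_Ioi fun y _ => phi_nonneg y

lemma Psi_continuous : Continuous Psi :=
  continuous_iff_continuousAt.2 fun x => (Psi_hasDerivAt x).continuousAt



lemma gker_nonneg (μ t b s : ℝ) (ht : 0 < t) : 0 ≤ gker μ t b s := by
  unfold gker; split_ifs with h
  · have : (0:ℝ) ≤ 2 * s - b := by linarith [h.1, h.2]
    positivity
  · exact le_refl 0

lemma gker_bound (μ t x : ℝ) (ht : 0 < t) (hx : 0 ≤ x) {s y : ℝ} (hs : 0 < s) (hy : 0 < y) :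
    gker μ t (max x s - y) s ≤
      Real.sqrt (2 / Real.pi) * t ^ (-(3 : ℝ) / 2) * Real.exp (|μ| * x + x ^ 2 / (4 * t)) *
        (Real.exp (-s ^ 2 / (4 * t) + (|μ| + 1) * s) *
          Real.exp (-(y - x) ^ 2 / (4 * t) + (|μ| + 1) * y)) := by
  have hc : (0:ℝ) ≤ Real.sqrt (2 / Real.pi) * t ^ (-(3 : ℝ) / 2) := by positivity
  unfold gker; split_ifs with h
  · set m := max x s with hm
    set b := m - y with hb
    set u := 2 * s - b with hu
    have hbs : b ≤ s := h.1
    have hm1 : s ≤ m := le_max_right _ _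
    have hm2 : m ≤ x + s := max_le (by linarith) (by linarith)
    have hu1 : s ≤ u := by simp only [hu]; linarith
    have hu2 : u ≤ s + y := by simp only [hu, hb]; linarith
    have hu3 : y - x ≤ u := by simp only [hu, hb]; linarith
    have hu0 : (0:ℝ) ≤ u := le_trans hs.le hu1
    clear_value u
    clear_value b
    clear_value m
    -- quadratic bound
    have hquad : s ^ 2 + (y - x) ^ 2 - x ^ 2 ≤ 2 * u ^ 2 := by
      nlinarith [sq_nonneg (u - (y - x)), sq_nonneg (u - s), mul_nonneg hx hy.le, sq_nonneg u]
    have h4t : (0:ℝ) < 4 * t := by linarith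
    have hexp1 : -u ^ 2 / (2 * t) ≤ x ^ 2 / (4 * t) - s ^ 2 / (4 * t) - (y - x) ^ 2 / (4 * t) := by
      have e : -u ^ 2 / (2 * t) - (x ^ 2 / (4 * t) - s ^ 2 / (4 * t) - (y - x) ^ 2 / (4 * t))
          = (s ^ 2 + (y - x) ^ 2 - x ^ 2 - 2 * u ^ 2) / (4 * t) := by
        field_simp; ring
      have : (s ^ 2 + (y - x) ^ 2 - x ^ 2 - 2 * u ^ 2) / (4 * t) ≤ 0 :=
        div_nonpos_of_nonpos_of_nonneg (by linarith) h4t.le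
      linarith [e ▸ this]
    -- absolute value of b
    have hbabs : -(μ * (b + μ * t / 2)) ≤ |μ| * (x + s + y) := by
      have h1 : -(μ * b) ≤ |μ| * |b| := by
        calc -(μ * b) ≤ |μ * b| := neg_le_abs _
        _ = |μ| * |b| := abs_mul _ _
      have h2 : |b| ≤ x + s + y := by
        rw [abs_le]; constructor
        · simp only [hb]; have : 0 ≤ m := le_trans hs.le hm1; linarith
        · simp only [hb]; linarith
      have h3 : |μ| * |b| ≤ |μ| * (x + s + y) := mul_le_mul_of_nonneg_left h2 (abs_nonneg μ)
      have h4 : (0:ℝ) ≤ μ ^ 2 * t / 2 := by positivity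
      have h5 : -(μ * (b + μ * t / 2)) = -(μ * b) - μ ^ 2 * t / 2 := by ring
      linarith
    -- exponent comparison
    have hE : -u ^ 2 / (2 * t) - μ * (b + μ * t / 2)
        ≤ (|μ| * x + x ^ 2 / (4 * t)) + (-s ^ 2 / (4 * t) + (|μ| + 1) * s)
          + (-(y - x) ^ 2 / (4 * t) + (|μ| + 1) * y) - (s + y) := by
      have h6 : -u ^ 2 / (2 * t) - μ * (b + μ * t / 2)
          = (-u ^ 2 / (2 * t)) + (-(μ * (b + μ * t / 2))) := by ring
      have h7 : |μ| * x + x ^ 2 / (4 * t) + (-s ^ 2 / (4 * t) + (|μ| + 1) * s)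
          + (-(y - x) ^ 2 / (4 * t) + (|μ| + 1) * y) - (s + y)
          = (x ^ 2 / (4 * t) - s ^ 2 / (4 * t) - (y - x) ^ 2 / (4 * t)) + |μ| * (x + s + y) := by
        ring
      rw [h6, h7]
      exact add_le_add hexp1 hbabs
    -- u ≤ exp (s + y)
    have huexp : u ≤ Real.exp (s + y) := by
      have := Real.add_one_le_exp (s + y)
      linarith
    have hmain : u * Real.exp (-u ^ 2 / (2 * t) - μ * (b + μ * t / 2))
        ≤ Real.exp (|μ| * x + x ^ 2 / (4 * t)) *
          (Real.exp (-s ^ 2 / (4 * t) + (|μ| + 1) * s) *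
            Real.exp (-(y - x) ^ 2 / (4 * t) + (|μ| + 1) * y)) := by
      calc u * Real.exp (-u ^ 2 / (2 * t) - μ * (b + μ * t / 2))
          ≤ Real.exp (s + y) * Real.exp ((|μ| * x + x ^ 2 / (4 * t))
            + (-s ^ 2 / (4 * t) + (|μ| + 1) * s)
            + (-(y - x) ^ 2 / (4 * t) + (|μ| + 1) * y) - (s + y)) := by
            exact mul_le_mul huexp (Real.exp_le_exp.2 (by linarith [hE])) (Real.exp_pos _).le
              (Real.exp_pos _).le
        _ = Real.exp (|μ| * x + x ^ 2 / (4 * t)) *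
            (Real.exp (-s ^ 2 / (4 * t) + (|μ| + 1) * s) *
              Real.exp (-(y - x) ^ 2 / (4 * t) + (|μ| + 1) * y)) := by
            rw [← Real.exp_add, ← Real.exp_add, ← Real.exp_add]; congr 1; ring
    calc Real.sqrt (2 / Real.pi) * t ^ (-(3 : ℝ) / 2) * u *
        Real.exp (-u ^ 2 / (2 * t) - μ * (b + μ * t / 2))
        = Real.sqrt (2 / Real.pi) * t ^ (-(3 : ℝ) / 2) *
          (u * Real.exp (-u ^ 2 / (2 * t) - μ * (b + μ * t / 2))) := by
          rw [mul_assoc]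
      _ ≤ Real.sqrt (2 / Real.pi) * t ^ (-(3 : ℝ) / 2) *
          (Real.exp (|μ| * x + x ^ 2 / (4 * t)) *
            (Real.exp (-s ^ 2 / (4 * t) + (|μ| + 1) * s) *
              Real.exp (-(y - x) ^ 2 / (4 * t) + (|μ| + 1) * y))) :=
          mul_le_mul_of_nonneg_left hmain hc
      _ = _ := (mul_assoc _ _ _).symm
  · positivity

lemma integrable_gauss (t a c : ℝ) (ht : 0 < t) :
    MeasureTheory.Integrable (fun z : ℝ => Real.exp (-(z - a) ^ 2 / (4 * t) + c * z)) := by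
  have key : ∀ z : ℝ, -(z - a) ^ 2 / (4 * t) + c * z
      = -(4 * t)⁻¹ * (z - (a + 2 * c * t)) ^ 2 + (c * a + c ^ 2 * t) := by
    intro z; field_simp; ring
  have : (fun z : ℝ => Real.exp (-(z - a) ^ 2 / (4 * t) + c * z))
      = fun z : ℝ => Real.exp (c * a + c ^ 2 * t) *
          Real.exp (-(4 * t)⁻¹ * (z - (a + 2 * c * t)) ^ 2) := by
    funext z; rw [key z, Real.exp_add, mul_comm]
  rw [this]
  have h1 : MeasureTheory.Integrable (fun z : ℝ => Real.exp (-(4 * t)⁻¹ * z ^ 2)) :=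
    integrable_exp_neg_mul_sq (by positivity)
  have h2 := ((measurePreserving_sub_right volume (a + 2 * c * t)).integrable_comp
    h1.aestronglyMeasurable).mpr h1
  exact h2.const_mul _

lemma gker_measurable (μ t : ℝ) : Measurable (fun q : ℝ × ℝ => gker μ t q.1 q.2) := by
  unfold gker
  refine Measurable.ite ?_ (by fun_prop) measurable_const
  exact (measurableSet_le measurable_fst measurable_snd).inter
    (measurableSet_le measurable_const measurable_snd)

lemma integrable_prod_main (μ t x : ℝ) (ht : 0 < t) (hx : 0 ≤ x) (h : ℝ → ℝ)
    (hc : ContinuousOn h (Set.Ici 0)) (C : ℝ) (hb : ∀ z ≥ (0:ℝ), |h z| ≤ C) :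
    MeasureTheory.Integrable
      (Function.uncurry fun s y => h y * gker μ t (max x s - y) s)
      ((volume.restrict (Ioi (0:ℝ))).prod (volume.restrict (Ioi (0:ℝ)))) := by
  have hC : 0 ≤ C := le_trans (abs_nonneg _) (hb 0 le_rfl)
  have hmg : Measurable (fun p : ℝ × ℝ => gker μ t (max x p.1 - p.2) p.1) :=
    (gker_measurable μ t).comp
      (((continuous_const.max continuous_fst).sub continuous_snd).prodMk continuous_fst
        |>.measurable)
  have hmh : AEStronglyMeasurable (fun p : ℝ × ℝ => h p.2)
      ((volume.restrict (Ioi (0:ℝ))).prod (volume.restrict (Ioi (0:ℝ)))) := by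
    rw [Measure.prod_restrict]
    refine ContinuousOn.aestronglyMeasurable ?_ (measurableSet_Ioi.prod measurableSet_Ioi)
    exact hc.comp continuous_snd.continuousOn (fun p hp => mem_Ici.2 (le_of_lt hp.2))
  have hmeas : AEStronglyMeasurable
      (Function.uncurry fun s y => h y * gker μ t (max x s - y) s)
      ((volume.restrict (Ioi (0:ℝ))).prod (volume.restrict (Ioi (0:ℝ)))) :=
    hmh.mul hmg.aestronglyMeasurable
  set K : ℝ := C * (Real.sqrt (2 / Real.pi) * t ^ (-(3 : ℝ) / 2)
    * Real.exp (|μ| * x + x ^ 2 / (4 * t))) with hK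
  have hint : MeasureTheory.Integrable
      (fun p : ℝ × ℝ => K * (Real.exp (-p.1 ^ 2 / (4 * t) + (|μ| + 1) * p.1)
        * Real.exp (-(p.2 - x) ^ 2 / (4 * t) + (|μ| + 1) * p.2)))
      ((volume.restrict (Ioi (0:ℝ))).prod (volume.restrict (Ioi (0:ℝ)))) := by
    have := (((integrable_gauss t 0 (|μ| + 1) ht).restrict
      (s := Ioi (0:ℝ))).mul_prod ((integrable_gauss t x (|μ| + 1) ht).restrict
      (s := Ioi (0:ℝ)))).const_mul K
    simpa [sub_zero] using this
  refine hint.mono' hmeas ?_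
  rw [Measure.prod_restrict]
  refine (MeasureTheory.ae_restrict_iff' (measurableSet_Ioi.prod measurableSet_Ioi)).2 ?_
  refine Eventually.of_forall (fun p hp => ?_)
  obtain ⟨hs, hy⟩ := hp
  simp only [Function.uncurry]
  rw [Real.norm_eq_abs, abs_mul, abs_of_nonneg (gker_nonneg _ _ _ _ ht)]
  have h1 : |h p.2| ≤ C := hb p.2 (le_of_lt hy)
  have h2 := gker_bound μ t x ht hx hs hy
  calc |h p.2| * gker μ t (max x p.1 - p.2) p.1
      ≤ C * (Real.sqrt (2 / Real.pi) * t ^ (-(3 : ℝ) / 2) * Real.exp (|μ| * x + x ^ 2 / (4 * t))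
        * (Real.exp (-p.1 ^ 2 / (4 * t) + (|μ| + 1) * p.1)
          * Real.exp (-(p.2 - x) ^ 2 / (4 * t) + (|μ| + 1) * p.2))) := by
        exact mul_le_mul h1 h2 (gker_nonneg _ _ _ _ ht) hC
    _ = K * (Real.exp (-p.1 ^ 2 / (4 * t) + (|μ| + 1) * p.1)
        * Real.exp (-(p.2 - x) ^ 2 / (4 * t) + (|μ| + 1) * p.2)) := by
        rw [hK]; ring

lemma inner_subst (μ t x : ℝ) (h : ℝ → ℝ) {s : ℝ} (hs : 0 < s) :
    ∫ b in Iic s, h (max x s - b) * gker μ t b s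
      = ∫ y in Ioi (0:ℝ), h y * gker μ t (max x s - y) s := by
  set m := max x s with hm
  have hms : s ≤ m := le_max_right _ _
  have step1 : ∫ b in Iic s, h (m - b) * gker μ t b s
      = ∫ b, h (m - b) * gker μ t b s := by
    apply setIntegral_eq_integral_of_forall_compl_eq_zero
    intro b hb
    have : ¬ (b ≤ s ∧ 0 ≤ s) := fun hc => hb hc.1
    simp [gker, this]
  have step2 : ∫ b, h (m - b) * gker μ t b s
      = ∫ y, h y * gker μ t (m - y) s := by
    rw [← integral_sub_left_eq_self (fun b => h (m - b) * gker μ t b s) volume m]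
    congr 1; funext y; simp [sub_sub_cancel]
  have step3 : ∫ y, h y * gker μ t (m - y) s
      = ∫ y in Ici (0:ℝ), h y * gker μ t (m - y) s := by
    symm
    apply setIntegral_eq_integral_of_forall_compl_eq_zero
    intro y hy
    simp only [mem_Ici, not_le] at hy
    have : ¬ (m - y ≤ s ∧ 0 ≤ s) := fun hc => by linarith [hc.1]
    unfold gker; rw [if_neg this, mul_zero]
  rw [step1, step2, step3, integral_Ici_eq_integral_Ioi]

lemma piece1_val (μ t x y : ℝ) (ht : 0 < t) (hx : 0 ≤ x) (hy : 0 < y) :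
    ∫ s in Ioc (0:ℝ) x, gker μ t (x - y) s
      = Real.sqrt (2 / Real.pi) * t ^ (-(3:ℝ)/2) * (t/2) *
        (Real.exp (-(x-y)^2/(2*t) - μ*((x-y) + μ*t/2))
          - Real.exp (-(x+y)^2/(2*t) - μ*((x-y) + μ*t/2))) := by
  set c := Real.sqrt (2 / Real.pi) with hc
  set r := t ^ (-(3:ℝ)/2) with hr
  set F : ℝ → ℝ := fun s => c * r * (2*s - (x-y)) *
    Real.exp (-(2*s - (x-y))^2/(2*t) - μ*((x-y) + μ*t/2)) with hF
  set Φ : ℝ → ℝ := fun s => c * r * (-(t/2) *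
    Real.exp (-(2*s - (x-y))^2/(2*t) - μ*((x-y) + μ*t/2))) with hΦ
  have hderiv : ∀ s : ℝ, HasDerivAt Φ (F s) s := by
    intro s
    have h1 : HasDerivAt (fun s : ℝ => 2*s - (x-y)) 2 s := by
      simpa using ((hasDerivAt_id s).const_mul 2).sub_const (x-y)
    have h2 : HasDerivAt (fun s : ℝ => -(2*s - (x-y))^2/(2*t) - μ*((x-y) + μ*t/2))
        (-(2*(2*s - (x-y))*2)/(2*t)) s := by
      have := (((h1.pow 2).neg).div_const (2*t)).sub_const (μ*((x-y) + μ*t/2))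
      refine this.congr_deriv ?_
      norm_num
    have h3 := (h2.exp.const_mul (-(t/2))).const_mul (c * r)
    have hD : F s = c * r * (-(t/2) *
        (Real.exp (-(2*s - (x-y))^2/(2*t) - μ*((x-y) + μ*t/2)) *
          (-(2*(2*s - (x-y))*2)/(2*t)))) := by
      simp only [hF]; field_simp
    rw [hD]
    exact h3
  have hcont : Continuous F := by fun_prop
  have key : ∀ a : ℝ, a ≤ x → (2*a - (x-y))^2 = (x-y)^2 → ∫ s in Ioc a x, F s
      = c * r * (t/2) * (Real.exp (-(x-y)^2/(2*t) - μ*((x-y) + μ*t/2))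
        - Real.exp (-(x+y)^2/(2*t) - μ*((x-y) + μ*t/2))) := by
    intro a hax hsq
    rw [← intervalIntegral.integral_of_le hax]
    rw [intervalIntegral.integral_eq_sub_of_hasDerivAt (fun s _ => hderiv s)
      (hcont.intervalIntegrable a x)]
    simp only [hΦ]
    rw [show (2*x - (x-y)) = x + y by ring]
    rw [show (-(2*a - (x-y))^2 : ℝ) = -(x-y)^2 by rw [hsq]]
    ring
  -- now relate gker to indicator of F
  have hcongr : EqOn (fun s => gker μ t (x - y) s) (fun s => indicator (Ici (x - y)) F s)
      (Ioc (0:ℝ) x) := by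
    intro s hs
    simp only [gker, indicator_apply, mem_Ici]
    rcases le_or_gt (x - y) s with hcond | hcond
    · rw [if_pos ⟨hcond, hs.1.le⟩, if_pos hcond]
    · rw [if_neg (fun hcc => absurd hcc.1 (not_le.2 hcond)), if_neg (not_le.2 hcond)]
  rw [setIntegral_congr_fun measurableSet_Ioc hcongr,
    setIntegral_indicator measurableSet_Ici]
  rcases le_or_gt (x - y) 0 with hxy | hxy
  · have : Ioc (0:ℝ) x ∩ Ici (x - y) = Ioc 0 x := by
      apply inter_eq_left.2
      intro s hs; exact le_trans hxy hs.1.le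
    rw [this]
    exact key 0 hx (by ring_nf)
  · have : Ioc (0:ℝ) x ∩ Ici (x - y) = Icc (x - y) x := by
      ext s
      simp only [mem_inter_iff, mem_Ioc, mem_Icc, mem_Ici]
      constructor
      · rintro ⟨⟨_, h2⟩, h3⟩; exact ⟨h3, h2⟩
      · rintro ⟨h1, h2⟩; exact ⟨⟨lt_of_lt_of_le hxy h1, h2⟩, h1⟩
    rw [this, integral_Icc_eq_integral_Ioc]
    exact key (x - y) (by linarith) (by ring)

lemma piece2_key (μ t x y : ℝ) (ht : 0 < t) (hx : 0 ≤ x) (hy : 0 < y) :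
    IntegrableOn (fun s => Real.sqrt (2/Real.pi) * t ^ (-(3:ℝ)/2) * (s + y) *
        Real.exp (-(s+y)^2/(2*t) - μ*((s - y) + μ*t/2))) (Ioi x) ∧
    ∫ s in Ioi x, Real.sqrt (2/Real.pi) * t ^ (-(3:ℝ)/2) * (s + y) *
        Real.exp (-(s+y)^2/(2*t) - μ*((s - y) + μ*t/2))
      = Real.sqrt (2/Real.pi) * t ^ (-(3:ℝ)/2) *
        (t * Real.exp (-(x+y)^2/(2*t) - μ*((x - y) + μ*t/2))
          - μ * t * Real.sqrt (2*Real.pi) * Real.sqrt t * Real.exp (2*μ*y)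
            * Psi ((x+y+μ*t)/Real.sqrt t)) := by
  have hst : (0:ℝ) < Real.sqrt t := Real.sqrt_pos.2 ht
  have hst' : Real.sqrt t ≠ 0 := ne_of_gt hst
  have hsq : Real.sqrt t ^ 2 = t := Real.sq_sqrt ht.le
  have h2pi : (0:ℝ) < Real.sqrt (2 * Real.pi) := Real.sqrt_pos.2 (by positivity)
  have h2pi' : Real.sqrt (2 * Real.pi) ≠ 0 := ne_of_gt h2pi
  set c := Real.sqrt (2 / Real.pi) with hcdef
  set r := t ^ (-(3:ℝ)/2) with hrdef
  set Cμ : ℝ := μ * t * Real.sqrt (2*Real.pi) * Real.sqrt t * Real.exp (2*μ*y) with hCμ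
  set F : ℝ → ℝ := fun s => c * r * (s + y) *
    Real.exp (-(s+y)^2/(2*t) - μ*((s - y) + μ*t/2)) with hF
  set G : ℝ → ℝ := fun s => c * r *
    (-(t * Real.exp (-(s+y)^2/(2*t) - μ*((s - y) + μ*t/2)))
      + Cμ * Psi ((s+y+μ*t)/Real.sqrt t)) with hG
  have hderiv : ∀ s : ℝ, HasDerivAt G (F s) s := by
    intro s
    have hP : HasDerivAt (fun s : ℝ => -(s+y)^2/(2*t) - μ*((s - y) + μ*t/2))
        (-(2*(s+y))/(2*t) - μ) s := by
      have h1 : HasDerivAt (fun s : ℝ => s + y) 1 s := (hasDerivAt_id s).add_const y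
      have h2 : HasDerivAt (fun s : ℝ => -(s+y)^2/(2*t)) (-(2*(s+y))/(2*t)) s := by
        have := ((h1.pow 2).neg).div_const (2*t)
        refine this.congr_deriv ?_
        norm_num
      have h3 : HasDerivAt (fun s : ℝ => μ*((s - y) + μ*t/2)) μ s := by
        have := (((hasDerivAt_id s).sub_const y).add_const (μ*t/2)).const_mul μ
        simpa using this
      exact h2.sub h3
    have hz : HasDerivAt (fun s : ℝ => (s+y+μ*t)/Real.sqrt t) (1/Real.sqrt t) s := by
      have := (((hasDerivAt_id s).add_const y).add_const (μ*t)).div_const (Real.sqrt t)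
      simpa using this
    have hPsi : HasDerivAt (fun s : ℝ => Psi ((s+y+μ*t)/Real.sqrt t))
        (-phi ((s+y+μ*t)/Real.sqrt t) * (1/Real.sqrt t)) s :=
      (Psi_hasDerivAt ((s+y+μ*t)/Real.sqrt t)).comp (h₂ := Psi) s hz
    have hG' := (((hP.exp.const_mul t).neg).add (hPsi.const_mul Cμ)).const_mul (c * r)
    have hphi : phi ((s+y+μ*t)/Real.sqrt t)
        = (1 / Real.sqrt (2*Real.pi)) * Real.exp (-(s+y+μ*t)^2/(2*t)) := by
      unfold phi
      congr 1
      rw [div_pow, hsq]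
      ring
    have hexp2 : Real.exp (2*μ*y) * Real.exp (-(s+y+μ*t)^2/(2*t))
        = Real.exp (-(s+y)^2/(2*t) - μ*((s - y) + μ*t/2)) := by
      rw [← Real.exp_add]
      congr 1
      field_simp
      ring
    have e1 : -(t * (Real.exp (-(s+y)^2/(2*t) - μ*((s - y) + μ*t/2)) * (-(2*(s+y))/(2*t) - μ)))
        = (s + y + μ*t) * Real.exp (-(s+y)^2/(2*t) - μ*((s - y) + μ*t/2)) := by
      field_simp
      ring
    have e2 : Cμ * (-phi ((s+y+μ*t)/Real.sqrt t) * (1/Real.sqrt t))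
        = -(μ*t) * Real.exp (-(s+y)^2/(2*t) - μ*((s - y) + μ*t/2)) := by
      rw [hphi, hCμ, ← hexp2]
      field_simp
    have hD : c * r *
        (-(t * (Real.exp (-(s+y)^2/(2*t) - μ*((s - y) + μ*t/2)) * (-(2*(s+y))/(2*t) - μ)))
          + Cμ * (-phi ((s+y+μ*t)/Real.sqrt t) * (1/Real.sqrt t))) = F s := by
      rw [e1, e2]
      simp only [hF]
      ring
    exact hD ▸ hG'
  have hnonneg : ∀ s ∈ Ioi x, 0 ≤ F s := by
    intro s hs
    have hs' : (0:ℝ) < s := lt_of_le_of_lt hx hs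
    have h1 : (0:ℝ) ≤ c := Real.sqrt_nonneg _
    have h2 : (0:ℝ) ≤ r := by rw [hrdef]; positivity
    have h3 : (0:ℝ) ≤ s + y := by linarith
    simp only [hF]
    positivity
  have htend : Tendsto G atTop (𝓝 0) := by
    have hT1 : Tendsto (fun s : ℝ => Real.exp (-(s+y)^2/(2*t) - μ*((s - y) + μ*t/2)))
        atTop (𝓝 0) := by
      apply squeeze_zero' (Eventually.of_forall fun s => (Real.exp_pos _).le)
      · show ∀ᶠ s in atTop, Real.exp (-(s+y)^2/(2*t) - μ*((s - y) + μ*t/2))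
          ≤ Real.exp (μ*y) * Real.exp (-s)
        filter_upwards [eventually_ge_atTop (2*t*(1+|μ|)), eventually_ge_atTop 0] with s h1 h2
        rw [← Real.exp_add]
        apply Real.exp_le_exp.2
        have habs1 : -μ ≤ |μ| := neg_le_abs μ
        have habs2 : μ ≤ |μ| := le_abs_self μ
        have habs0 : 0 ≤ |μ| := abs_nonneg μ
        have hkey : -(s+y)^2/(2*t) - μ*((s - y) + μ*t/2) - (μ*y + -s) ≤ 0 := by
          have e : -(s+y)^2/(2*t) - μ*((s - y) + μ*t/2) - (μ*y + -s)
              = -((s+y)^2 + 2*t*μ*s + μ^2*t^2 - 2*t*s)/(2*t) := by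
            field_simp
            ring
          rw [e]
          apply div_nonpos_of_nonpos_of_nonneg _ (by linarith : (0:ℝ) ≤ 2*t)
          apply neg_nonpos_of_nonneg
          have p1 : 2*t*(1+|μ|)*s ≤ s*s := mul_le_mul_of_nonneg_right h1 h2
          have p2 : (0:ℝ) ≤ 2*t*s := by positivity
          have p3 : -(|μ|) * (2*t*s) ≤ μ * (2*t*s) :=
            mul_le_mul_of_nonneg_right (by linarith) p2
          nlinarith [p1, p3, sq_nonneg (μ*t), mul_nonneg h2 hy.le, sq_nonneg y]
        linarith
      · have := (Real.tendsto_exp_neg_atTop_nhds_zero).const_mul (Real.exp (μ*y))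
        simpa using this
    have hT2 : Tendsto (fun s : ℝ => Psi ((s+y+μ*t)/Real.sqrt t)) atTop (𝓝 0) := by
      apply Psi_tendsto.comp
      apply Tendsto.atTop_div_const hst
      exact tendsto_atTop_add_const_right atTop (μ*t)
        (tendsto_atTop_add_const_right atTop y tendsto_id)
    have := (((hT1.const_mul t).neg).add (hT2.const_mul Cμ)).const_mul (c * r)
    simp only [mul_zero, neg_zero, add_zero, zero_add] at this
    exact this
  have hval := integral_Ioi_of_hasDerivAt_of_nonneg' (fun s _ => hderiv s) hnonneg htend
  have hint := integrableOn_Ioi_deriv_of_nonneg' (fun s _ => hderiv s) hnonneg htend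
  constructor
  · exact hint
  · rw [hval]
    simp only [hG]
    ring


lemma Kval (μ t x y : ℝ) (ht : 0 < t) (hx : 0 ≤ x) (hy : 0 < y) :
    ∫ s in Ioi (0:ℝ), gker μ t (max x s - y) s = Gker μ t x y := by
  have hst : (0:ℝ) < Real.sqrt t := Real.sqrt_pos.2 ht
  have hst' : Real.sqrt t ≠ 0 := ne_of_gt hst
  have hsq : Real.sqrt t ^ 2 = t := Real.sq_sqrt ht.le
  have h2pi : (0:ℝ) < Real.sqrt (2 * Real.pi) := Real.sqrt_pos.2 (by positivity)
  have h2pi' : Real.sqrt (2 * Real.pi) ≠ 0 := ne_of_gt h2pi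
  -- scalar identities
  have hr1 : t ^ (-(3:ℝ)/2) = (t * Real.sqrt t)⁻¹ := by
    rw [show (-(3:ℝ)/2) = -((3:ℝ)/2) by norm_num, Real.rpow_neg ht.le]
    congr 1
    rw [show ((3:ℝ)/2) = 1 + (1/2 : ℝ) by norm_num, Real.rpow_add ht, Real.rpow_one,
      ← Real.sqrt_eq_rpow]
  have hc2 : Real.sqrt (2 / Real.pi) = 2 / Real.sqrt (2 * Real.pi) := by
    rw [eq_div_iff h2pi', ← Real.sqrt_mul (by positivity)]
    rw [show (2 / Real.pi) * (2 * Real.pi) = 4 by field_simp; ring]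
    rw [show (4:ℝ) = 2^2 by norm_num, Real.sqrt_sq (by norm_num)]
  -- the two pieces
  obtain ⟨hint2, hval2⟩ := piece2_key μ t x y ht hx hy
  set F1 : ℝ → ℝ := fun s => Real.sqrt (2 / Real.pi) * t ^ (-(3:ℝ)/2) * (2*s - (x-y)) *
    Real.exp (-(2*s - (x-y))^2/(2*t) - μ*((x-y) + μ*t/2)) with hF1
  set F2 : ℝ → ℝ := fun s => Real.sqrt (2/Real.pi) * t ^ (-(3:ℝ)/2) * (s + y) *
    Real.exp (-(s+y)^2/(2*t) - μ*((s - y) + μ*t/2)) with hF2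
  have hcong1 : EqOn (fun s => gker μ t (max x s - y) s) (fun s => gker μ t (x - y) s)
      (Ioc (0:ℝ) x) := by
    intro s hs
    simp only
    rw [max_eq_left hs.2]
  have hcong1' : EqOn (fun s => gker μ t (x - y) s) (fun s => indicator (Ici (x - y)) F1 s)
      (Ioc (0:ℝ) x) := by
    intro s hs
    simp only [gker, indicator_apply, mem_Ici]
    rcases le_or_gt (x - y) s with hcond | hcond
    · rw [if_pos ⟨hcond, hs.1.le⟩, if_pos hcond]
    · rw [if_neg (fun hcc => absurd hcc.1 (not_le.2 hcond)), if_neg (not_le.2 hcond)]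
  have hcong2 : EqOn (fun s => gker μ t (max x s - y) s) F2 (Ioi x) := by
    intro s hs
    simp only
    rw [max_eq_right (le_of_lt hs)]
    have h0s : (0:ℝ) ≤ s := le_trans hx (le_of_lt hs)
    unfold gker
    rw [if_pos ⟨by linarith, h0s⟩]
    simp only [hF2]
    rw [show 2*s - (s - y) = s + y by ring]
  have hF1cont : Continuous F1 := by fun_prop
  have int1 : IntegrableOn (fun s => gker μ t (max x s - y) s) (Ioc (0:ℝ) x) := by
    have i1 : IntegrableOn F1 (Ioc (0:ℝ) x) := hF1cont.integrableOn_Ioc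
    have i2 : IntegrableOn (fun s => indicator (Ici (x - y)) F1 s) (Ioc (0:ℝ) x) :=
      i1.indicator measurableSet_Ici
    exact (i2.congr_fun (fun s hs => ((hcong1 hs).trans (hcong1' hs)).symm) measurableSet_Ioc)
  have int2 : IntegrableOn (fun s => gker μ t (max x s - y) s) (Ioi x) :=
    hint2.congr_fun (fun s hs => (hcong2 hs).symm) measurableSet_Ioi
  rw [← Ioc_union_Ioi_eq_Ioi hx,
    setIntegral_union (Ioc_disjoint_Ioi le_rfl) measurableSet_Ioi int1 int2,
    setIntegral_congr_fun measurableSet_Ioc hcong1,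
    setIntegral_congr_fun measurableSet_Ioi hcong2,
    piece1_val μ t x y ht hx hy, hval2]
  -- final algebra
  have hE1 : -((x - y + μ * t) / Real.sqrt t) ^ 2 / 2
      = -(x-y)^2/(2*t) - μ*((x-y) + μ*t/2) := by
    rw [div_pow, hsq]; field_simp; ring
  have hE2 : (2*μ*y) + (-((x + y + μ * t) / Real.sqrt t) ^ 2 / 2)
      = -(x+y)^2/(2*t) - μ*((x-y) + μ*t/2) := by
    rw [div_pow, hsq]; field_simp; ring
  have hBeq : Real.exp (-(x+y)^2/(2*t) - μ*((x-y) + μ*t/2))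
      = Real.exp (2*μ*y) * Real.exp (-((x + y + μ * t) / Real.sqrt t) ^ 2 / 2) := by
    rw [← Real.exp_add, hE2]
  unfold Gker phi
  rw [show Real.exp (-((x - y + μ * t) / Real.sqrt t) ^ 2 / 2)
      = Real.exp (-(x-y)^2/(2*t) - μ*((x-y) + μ*t/2)) from congrArg Real.exp hE1]
  rw [hBeq, hr1, hc2]
  field_simp
  ring

/-- the law of the reflecting Brownian motion with drift is
given by the kernel `G`. -/
theorem double_integral_eq_G_integral (μ : ℝ) (h : ℝ → ℝ)
    (hc : ContinuousOn h (Set.Ici 0)) (hb : ∃ C : ℝ, ∀ x ≥ (0 : ℝ), |h x| ≤ C) :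
    ∀ t > (0 : ℝ), ∀ x ≥ (0 : ℝ),
      (∫ s in Set.Ioi (0 : ℝ), ∫ b in Set.Iic s, h (max x s - b) * gker μ t b s) =
        ∫ y in Set.Ioi (0 : ℝ), h y * Gker μ t x y := by
  obtain ⟨C, hC⟩ := hb
  intro t ht x hx
  have step1 : ∫ s in Ioi (0:ℝ), ∫ b in Iic s, h (max x s - b) * gker μ t b s
      = ∫ s in Ioi (0:ℝ), ∫ y in Ioi (0:ℝ), h y * gker μ t (max x s - y) s :=
    setIntegral_congr_fun measurableSet_Ioi (fun s hs => inner_subst μ t x h hs)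
  rw [step1]
  have hswap := MeasureTheory.integral_integral_swap
    (f := fun s y => h y * gker μ t (max x s - y) s)
    (μ := volume.restrict (Ioi (0:ℝ))) (ν := volume.restrict (Ioi (0:ℝ)))
    (integrable_prod_main μ t x ht hx h hc C hC)
  rw [hswap]
  apply setIntegral_congr_fun measurableSet_Ioi
  intro y hy
  show ∫ s in Ioi (0:ℝ), h y * gker μ t (max x s - y) s = h y * Gker μ t x y
  rw [MeasureTheory.integral_const_mul, Kval μ t x y ht hx hy]
end
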